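/- Let G be the simple graph on vertex set {1,...,7} with edge set E = {{1,2},{1,4},{1,5},{1,6},{1,7},{2,3},{2,5},{2,7},{3,4},{3,5},{3,6},{3,7},{4,5},{4,7},{5,6},{6,7}} (the graph G1233 of the atlas). Then msr(G) = 3; that is, there exists a 7×7 Hermitian positive semidefinite complex matrix with graph G of rank 3, and every 7×7 Hermitian positive semidefinite complex matrix with graph G has rank at least 3. -/

import Mathlib

open Matrix ComplexOrder

/-- The edge set of the graph G1233 on vertices 1,...,7. -/
def edgesG1233 : Set (Sym2 ℕ) :=
  {s(1, 2), s(1, 4), s(1, 5), s(1, 6), s(1, 7), s(2, 3), s(2, 5), s(2, 7), s(3, 4), s(3, 5), s(3, 6), s(3, 7), s(4, 5), s(4, 7), s(5, 6), s(6, 7)}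

/-- `M` has graph G1233: for `i ≠ j`, `M i j ≠ 0` iff `{i+1, j+1}` is an edge of G1233. -/
def HasGraphG1233 (M : Matrix (Fin 7) (Fin 7) ℂ) : Prop :=
  ∀ i j : Fin 7, i ≠ j → (M i j ≠ 0 ↔ s((i : ℕ) + 1, (j : ℕ) + 1) ∈ edgesG1233)

/-!
Vertices 2, 4, 6 are pairwise non-adjacent and each is adjacent to vertex 1. In a positive
semidefinite matrix a zero diagonal entry kills its whole row, so these three diagonal entries
are nonzero and the corresponding principal 3 × 3 submatrix is an invertible diagonal matrix;
hence the rank is at least 3. Conversely, the Gram matrix of seven suitable integer vectors in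
`ℂ³` has graph G1233 and rank at most 3, hence exactly 3.
-/

namespace Matrix

lemma PosSemidef.apply_eq_zero_of_diag_eq_zero {n 𝕜 : Type*} [Fintype n] [RCLike 𝕜]
    {A : Matrix n n 𝕜} (hA : A.PosSemidef) {i : n} (hi : A i i = 0) (j : n) : A j i = 0 := by
  classical
  have hker : A *ᵥ Pi.single i 1 = 0 :=
    (hA.dotProduct_mulVec_zero_iff _).mp (by simp [mulVec_single, hi])
  simpa [mulVec_single] using congrFun hker j

theorem card_le_rank_of_submatrix_isDiag {k m n R : Type*} [Fintype k] [DecidableEq k]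
    [Fintype n] [Field R] (A : Matrix m n R) (r : k → m) (c : k → n)
    (hoff : ∀ a b, a ≠ b → A (r a) (c b) = 0) (hdiag : ∀ a, A (r a) (c a) ≠ 0) :
    Fintype.card k ≤ A.rank := by
  classical
  have hsub : A.submatrix r c = diagonal fun a => A (r a) (c a) := by
    ext a b
    rcases eq_or_ne a b with rfl | hab
    · simp
    · simp [hoff a b hab, hab]
  calc Fintype.card k = (diagonal fun a => A (r a) (c a)).rank := by
        rw [rank_diagonal, Fintype.card_subtype, Finset.filter_true_of_mem fun a _ => hdiag a,
          Finset.card_univ]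
    _ ≤ A.rank := hsub ▸ rank_submatrix_le A r c

lemma conjTranspose_map_intCast_mul_self {m n R : Type*} [Fintype m] [Ring R] [StarRing R]
    (B : Matrix m n ℤ) : (B.map (Int.cast : ℤ → R))ᴴ * B.map Int.cast = (Bᵀ * B).map Int.cast := by
  rw [← conjTranspose_map _ fun z => (star_intCast z).symm, conjTranspose_eq_transpose_of_trivial]
  exact (Matrix.map_mul (f := Int.castRingHom R)).symm

end Matrix

-- `![1, 3, 5]` are the 0-based indices of vertices 2, 4, 6.
theorem three_le_rank_of_hasGraphG1233 {M : Matrix (Fin 7) (Fin 7) ℂ} (hM : M.PosSemidef)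
    (hG : HasGraphG1233 M) : 3 ≤ M.rank := by
  have hindep : ∀ a b : Fin 3, a ≠ b → M (![1, 3, 5] a) (![1, 3, 5] b) = 0 := by
    intro a b hab
    have hinj : Function.Injective ![(1 : Fin 7), 3, 5] := by decide
    by_contra hne
    refine absurd ((hG _ _ (hinj.ne hab)).mp hne) ?_
    fin_cases a <;> fin_cases b <;> simp_all [edgesG1233]
  have hdiag : ∀ a : Fin 3, M (![1, 3, 5] a) (![1, 3, 5] a) ≠ 0 := by
    intro a hzero
    refine (hG 0 (![1, 3, 5] a) (by fin_cases a <;> decide)).mpr ?_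
      (hM.apply_eq_zero_of_diag_eq_zero hzero 0)
    fin_cases a <;> simp [edgesG1233]
  simpa using card_le_rank_of_submatrix_isDiag M ![1, 3, 5] ![1, 3, 5] hindep hdiag

-- Column `j` is the Gram vector of vertex `j + 1`.
def gramVectors : Matrix (Fin 3) (Fin 7) ℤ :=
  !![1, 1, 1, 0, 1, 0, 1; 1, 0, 1, 1, 2, 0, 1; 1, 0, -2, 0, 3, 1, -1]

lemma hasGraphG1233_gram :
    HasGraphG1233 ((gramVectors.map (Int.cast : ℤ → ℂ))ᴴ * gramVectors.map Int.cast) := by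
  rw [conjTranspose_map_intCast_mul_self]
  simp only [HasGraphG1233, map_apply, ne_eq, Int.cast_eq_zero, edgesG1233, Set.mem_insert_iff,
    Set.mem_singleton_iff]
  decide

/-- msr(G1233) = 3. -/
theorem msr_G1233 :
    (∃ M : Matrix (Fin 7) (Fin 7) ℂ, M.PosSemidef ∧ HasGraphG1233 M ∧ M.rank = 3) ∧
    (∀ M : Matrix (Fin 7) (Fin 7) ℂ, M.PosSemidef → HasGraphG1233 M → 3 ≤ M.rank) := by
  set A := gramVectors.map (Int.cast : ℤ → ℂ)
  have hpsd : (Aᴴ * A).PosSemidef := posSemidef_conjTranspose_mul_self A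
  have hrank : (Aᴴ * A).rank ≤ 3 := by
    simpa only [rank_conjTranspose_mul_self] using rank_le_height A
  exact ⟨⟨Aᴴ * A, hpsd, hasGraphG1233_gram,
    hrank.antisymm (three_le_rank_of_hasGraphG1233 hpsd hasGraphG1233_gram)⟩,
    fun _ => three_le_rank_of_hasGraphG1233⟩
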